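/- arXiv:1905.09356 — 2 statements merged into one kernel-verified Lean document; each statement's English description precedes it below -/
import Mathlib

section
/- Let 0 < β₁, β₂ < 1 with λ := β₁/√β₂ < 1, and let g_1, …, g_t ∈ ℝ^d. Define m_t = (1−β₁) Σ_{i=1}^t β₁^{t−i} g_i and v_t = (1−β₂) Σ_{i=1}^t β₂^{t−i} g_i ⊙ g_i, and let v̂_t ∈ ℝ^d satisfy v̂_{t,j} ≥ v_{t,j} for every j. Then Σ_{j=1}^d m_{t,j}²/√(v̂_{t,j}) ≤ ( (1−β₁)/√(1−β₂) ) · Σ_{j=1}^d Σ_{i=1}^t λ^{t−i} |g_{i,j}|, where terms with v̂_{t,j} = 0 are interpreted as 0. -/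
/-!
Work one coordinate at a time. Cauchy–Schwarz against the weights `β₁^(t-i)`, whose sum is
below `1/(1-β₁)`, gives `m_j² ≤ (1-β₁) Σᵢ β₁^(t-i) g_{i,j}²`. Each summand is then divided by
`√v̂_j`, which dominates the contribution `√(1-β₂) √β₂^(t-i) |g_{i,j}|` of the single index `i`
to `√v_j`; since `x²/s ≤ |x|/c` whenever `c|x| ≤ s`, the `i`-th summand is at most
`(β₁/√β₂)^(t-i) |g_{i,j}| / √(1-β₂)`.
-/

open Finset

/-- The recursion `m_t = β m_{t-1} + (1 - β) x_t` started from `m_0 = 0`, unrolled. -/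
noncomputable def expMovingAvg (β : ℝ) (x : ℕ → ℝ) (t : ℕ) : ℝ :=
  (1 - β) * ∑ i ∈ Icc 1 t, β ^ (t - i) * x i

lemma sum_Icc_pow_sub_le {β : ℝ} (h₀ : 0 ≤ β) (h₁ : β < 1) (t : ℕ) :
    ∑ i ∈ Icc 1 t, β ^ (t - i) ≤ (1 - β)⁻¹ := by
  have hreflect : ∑ i ∈ Icc 1 t, β ^ (t - i) = ∑ i ∈ Ico 0 t, β ^ i := by
    rw [← Ico_add_one_right_eq_Icc, sum_Ico_reflect _ _ le_rfl]
    simp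
  simpa [hreflect] using geom_sum_Ico_le_of_lt_one (m := 0) (n := t) h₀ h₁

lemma expMovingAvg_sq_le {β : ℝ} (h₀ : 0 ≤ β) (h₁ : β < 1) (x : ℕ → ℝ) (t : ℕ) :
    expMovingAvg β x t ^ 2 ≤ expMovingAvg β (fun i => x i ^ 2) t := by
  have hCS : (∑ i ∈ Icc 1 t, β ^ (t - i) * x i) ^ 2
      ≤ (∑ i ∈ Icc 1 t, β ^ (t - i)) * ∑ i ∈ Icc 1 t, β ^ (t - i) * x i ^ 2 :=
    sum_sq_le_sum_mul_sum_of_sq_le_mul _ (fun i _ => by positivity) (fun i _ => by positivity)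
      (fun i _ => le_of_eq (by ring))
  have hβ : 0 < 1 - β := sub_pos.2 h₁
  calc expMovingAvg β x t ^ 2
      = (1 - β) ^ 2 * (∑ i ∈ Icc 1 t, β ^ (t - i) * x i) ^ 2 := by
        rw [expMovingAvg]; ring
    _ ≤ (1 - β) ^ 2 * ((1 - β)⁻¹ * ∑ i ∈ Icc 1 t, β ^ (t - i) * x i ^ 2) := by
        gcongr
        exact hCS.trans (by gcongr; exact sum_Icc_pow_sub_le h₀ h₁ t)
    _ = expMovingAvg β (fun i => x i ^ 2) t := by
        rw [expMovingAvg]; field_simp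

lemma le_expMovingAvg {β : ℝ} (h₀ : 0 ≤ β) (h₁ : β ≤ 1) {x : ℕ → ℝ} (hx : ∀ i, 0 ≤ x i)
    {t i : ℕ} (hi : i ∈ Icc 1 t) : (1 - β) * (β ^ (t - i) * x i) ≤ expMovingAvg β x t :=
  mul_le_mul_of_nonneg_left
    (single_le_sum (fun j _ => mul_nonneg (pow_nonneg h₀ _) (hx j)) hi) (sub_nonneg.2 h₁)

lemma sq_div_le_abs_div {x s c : ℝ} (hc : 0 < c) (h : c * |x| ≤ s) : x ^ 2 / s ≤ |x| / c := by
  rcases eq_or_ne x 0 with rfl | hx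
  · simp
  have hx' : 0 < |x| := abs_pos.2 hx
  calc x ^ 2 / s ≤ x ^ 2 / (c * |x|) :=
        div_le_div_of_nonneg_left (sq_nonneg x) (by positivity) h
    _ = |x| / c := by rw [← sq_abs]; field_simp

theorem expMovingAvg_sq_div_sqrt_le {β₁ β₂ w : ℝ} (hβ₁ : 0 ≤ β₁) (hβ₁' : β₁ < 1)
    (hβ₂ : 0 < β₂) (hβ₂' : β₂ < 1) {x : ℕ → ℝ} {t : ℕ}
    (hw : expMovingAvg β₂ (fun i => x i ^ 2) t ≤ w) :
    expMovingAvg β₁ x t ^ 2 / √w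
      ≤ (1 - β₁) / √(1 - β₂) * ∑ i ∈ Icc 1 t, (β₁ / √β₂) ^ (t - i) * |x i| := by
  have hc : ∀ i, 0 < √(1 - β₂) * √β₂ ^ (t - i) := fun i =>
    mul_pos (Real.sqrt_pos.2 (sub_pos.2 hβ₂')) (pow_pos (Real.sqrt_pos.2 hβ₂) _)
  have hterm : ∀ i ∈ Icc 1 t, x i ^ 2 / √w ≤ |x i| / (√(1 - β₂) * √β₂ ^ (t - i)) := by
    intro i hi
    have hsingle : (1 - β₂) * (β₂ ^ (t - i) * x i ^ 2) ≤ w :=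
      (le_expMovingAvg hβ₂.le hβ₂'.le (fun i => sq_nonneg (x i)) hi).trans hw
    have hsq : (√(1 - β₂) * √β₂ ^ (t - i) * |x i|) ^ 2 = (1 - β₂) * (β₂ ^ (t - i) * x i ^ 2) := by
      rw [mul_pow, mul_pow, pow_right_comm, Real.sq_sqrt (sub_pos.2 hβ₂').le, Real.sq_sqrt hβ₂.le,
        sq_abs, mul_assoc]
    exact sq_div_le_abs_div (hc i) (Real.le_sqrt_of_sq_le (hsq ▸ hsingle))
  calc expMovingAvg β₁ x t ^ 2 / √w ≤ expMovingAvg β₁ (fun i => x i ^ 2) t / √w := by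
        gcongr; exact expMovingAvg_sq_le hβ₁ hβ₁' x t
    _ = (1 - β₁) * ∑ i ∈ Icc 1 t, β₁ ^ (t - i) * (x i ^ 2 / √w) := by
        simp only [expMovingAvg, mul_div_assoc, sum_div]
    _ ≤ (1 - β₁) * ∑ i ∈ Icc 1 t, β₁ ^ (t - i) * (|x i| / (√(1 - β₂) * √β₂ ^ (t - i))) := by
        gcongr (1 - β₁) * ∑ i ∈ Icc 1 t, _ * ?_ with i hi
        exact hterm i hi
    _ = (1 - β₁) / √(1 - β₂) * ∑ i ∈ Icc 1 t, (β₁ / √β₂) ^ (t - i) * |x i| := by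
        rw [mul_sum, mul_sum]
        refine sum_congr rfl fun i _ => ?_
        have hci := (hc i).ne'
        rw [div_pow]
        field_simp

theorem convgAdam_moment_energy_step_general
    (d t : ℕ) (β₁ β₂ : ℝ)
    (hβ₁ : 0 < β₁) (hβ₁' : β₁ < 1) (hβ₂ : 0 < β₂) (hβ₂' : β₂ < 1)
    (g : ℕ → Fin d → ℝ)
    (m v : Fin d → ℝ)
    (hm : ∀ j, m j = (1 - β₁) * ∑ i ∈ Finset.Icc 1 t, β₁ ^ (t - i) * g i j)
    (hv : ∀ j, v j = (1 - β₂) * ∑ i ∈ Finset.Icc 1 t, β₂ ^ (t - i) * (g i j) ^ 2)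
    (vhat : Fin d → ℝ) (hvhat : ∀ j, v j ≤ vhat j) :
    ∑ j, (m j) ^ 2 / Real.sqrt (vhat j)
      ≤ ((1 - β₁) / Real.sqrt (1 - β₂)) *
          ∑ j, ∑ i ∈ Finset.Icc 1 t, (β₁ / Real.sqrt β₂) ^ (t - i) * |g i j| := by
  rw [mul_sum]
  refine sum_le_sum fun j _ => ?_
  rw [hm j]
  exact expMovingAvg_sq_div_sqrt_le hβ₁.le hβ₁' hβ₂ hβ₂' ((hv j).symm.trans_le (hvhat j))

/-- the single-step bound inside Lemma 1 of the paper.  With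
`m_t = (1−β₁) Σ_{i=1}^t β₁^{t−i} g_i`, `v_t = (1−β₂) Σ_{i=1}^t β₂^{t−i} g_i ⊙ g_i`,
`λ = β₁/√β₂ < 1` and `v̂_{t,j} ≥ v_{t,j}`,
`Σ_j m_{t,j}²/√(v̂_{t,j}) ≤ ((1−β₁)/√(1−β₂)) Σ_j Σ_{i=1}^t λ^{t−i} |g_{i,j}|`.
(Coordinates with `v̂_{t,j} = 0` contribute `0`; Lean's division by zero is zero.) -/
theorem convgAdam_moment_energy_step
    (d t : ℕ) (β₁ β₂ : ℝ)
    (hβ₁ : 0 < β₁) (hβ₁' : β₁ < 1) (hβ₂ : 0 < β₂) (hβ₂' : β₂ < 1)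
    (hlam : β₁ / Real.sqrt β₂ < 1)
    (g : ℕ → Fin d → ℝ)
    (m v : Fin d → ℝ)
    (hm : ∀ j, m j = (1 - β₁) * ∑ i ∈ Finset.Icc 1 t, β₁ ^ (t - i) * g i j)
    (hv : ∀ j, v j = (1 - β₂) * ∑ i ∈ Finset.Icc 1 t, β₂ ^ (t - i) * (g i j) ^ 2)
    (vhat : Fin d → ℝ) (hvhat : ∀ j, v j ≤ vhat j) :
    ∑ j, (m j) ^ 2 / Real.sqrt (vhat j)
      ≤ ((1 - β₁) / Real.sqrt (1 - β₂)) *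
          ∑ j, ∑ i ∈ Finset.Icc 1 t, (β₁ / Real.sqrt β₂) ^ (t - i) * |g i j| :=
  convgAdam_moment_energy_step_general d t β₁ β₂ hβ₁ hβ₁' hβ₂ hβ₂' g m v hm hv vhat hvhat
end

section
/- Let 0 < β₁₂₁ < 1, 0 < β₂₂ < 1 with λ₂ := β₁₂₁/β₂₂ < 1, and let (β_{12j})_{j≥1} satisfy 0 ≤ β_{12j} ≤ β₁₂₁ for all j. Let g_{2,1}, …, g_{2,t} ∈ ℝ^{n×d}, define m_{2,t} = β_{12t} m_{2,t−1} + (1−β_{12t}) g_{2,t} with m_{2,0} = 0, and let v̂_{2,t} ∈ ℝ^{n×d} satisfy, entrywise, v̂_{2,t} ≥ (1−β₂₂) Σ_{j=1}^t β₂₂^{t−j} g_{2,j} ⊙ g_{2,j}. Then ‖(1/√v̂_{2,t}) ⊙ m_{2,t}‖² ≤ n·d / ( (1−β₁₂₁)(1−β₂₂)(1−λ₂) ), where entries with v̂_{2,t} = 0 are interpreted as 0. -/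
/-!
Unrolling the recursion, `|m_t| ≤ ∑_{j ≤ t} β₁₂₁^{t-j} |g_j|` entrywise. Cauchy–Schwarz with the
weights `β₁₂₁^{t-j}`, whose total is at most `1/(1-β₁₂₁)`, gives
`m_t² ≤ ∑_j β₁₂₁^{t-j} g_j² / (1-β₁₂₁)`, and since `λ₂ < 1` forces `β₁₂₁ < β₂₂` this is at most
`v̂ / ((1-β₁₂₁)(1-β₂₂))`. The remaining factor `1/(1-λ₂) ≥ 1` is slack.
-/

open Finset

noncomputable section

def discountedSum (r : ℝ) (x : ℕ → ℝ) (s : ℕ) : ℝ :=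
  ∑ j ∈ Icc 1 s, r ^ (s - j) * x j

@[simp]
theorem discountedSum_zero (r : ℝ) (x : ℕ → ℝ) : discountedSum r x 0 = 0 := by
  simp [discountedSum]

theorem discountedSum_succ (r : ℝ) (x : ℕ → ℝ) (s : ℕ) :
    discountedSum r x (s + 1) = r * discountedSum r x s + x (s + 1) := by
  rw [discountedSum, sum_Icc_succ_top (Nat.le_add_left 1 s), discountedSum, mul_sum,
    Nat.sub_self, pow_zero, one_mul]
  congr 1
  refine sum_congr rfl fun j hj => ?_
  rw [Nat.sub_add_comm (mem_Icc.mp hj).2, pow_succ]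
  ring

theorem discountedSum_nonneg {r : ℝ} (hr : 0 ≤ r) {x : ℕ → ℝ} (hx : ∀ j, 0 ≤ x j) (s : ℕ) :
    0 ≤ discountedSum r x s :=
  sum_nonneg fun j _ => mul_nonneg (pow_nonneg hr _) (hx j)

theorem discountedSum_mono_rate {r r' : ℝ} (hr : 0 ≤ r) (hrr' : r ≤ r') {x : ℕ → ℝ}
    (hx : ∀ j, 0 ≤ x j) (s : ℕ) : discountedSum r x s ≤ discountedSum r' x s :=
  sum_le_sum fun j _ => mul_le_mul_of_nonneg_right (pow_le_pow_left₀ hr hrr' _) (hx j)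

theorem discountedSum_one_le {r : ℝ} (hr : 0 ≤ r) (hr1 : r < 1) (s : ℕ) :
    discountedSum r 1 s ≤ 1 / (1 - r) := by
  have h1r : 0 < 1 - r := sub_pos.mpr hr1
  induction s with
  | zero => simpa using h1r.le
  | succ s ih =>
    calc discountedSum r 1 (s + 1) = r * discountedSum r 1 s + 1 := discountedSum_succ r 1 s
      _ ≤ r * (1 / (1 - r)) + 1 := by gcongr
      _ = 1 / (1 - r) := by field_simp; ring

theorem sq_discountedSum_abs_le {r : ℝ} (hr : 0 ≤ r) (x : ℕ → ℝ) (s : ℕ) :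
    discountedSum r (fun j => |x j|) s ^ 2
      ≤ discountedSum r 1 s * discountedSum r (fun j => x j ^ 2) s :=
  sum_sq_le_sum_mul_sum_of_sq_le_mul _ (fun j _ => by simp [pow_nonneg hr])
    (fun j _ => by positivity) fun j _ => le_of_eq <| by rw [mul_pow, sq_abs, Pi.one_apply]; ring

theorem abs_le_discountedSum_of_moving_average {r : ℝ} (hr : r ≤ 1) {b x m : ℕ → ℝ}
    (hb0 : ∀ j, 0 ≤ b j) (hb : ∀ j, b j ≤ r) (hm0 : m 0 = 0)
    (hm : ∀ j, m (j + 1) = b (j + 1) * m j + (1 - b (j + 1)) * x (j + 1)) (s : ℕ) :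
    |m s| ≤ discountedSum r (fun j => |x j|) s := by
  induction s with
  | zero => simp [hm0]
  | succ s ih =>
    have hb1 : 0 ≤ 1 - b (s + 1) := by linarith [hb (s + 1)]
    calc |m (s + 1)| ≤ b (s + 1) * |m s| + (1 - b (s + 1)) * |x (s + 1)| := by
          rw [hm s]
          refine (abs_add_le _ _).trans_eq ?_
          rw [abs_mul, abs_mul, abs_of_nonneg (hb0 _), abs_of_nonneg hb1]
      _ ≤ r * discountedSum r (fun j => |x j|) s + |x (s + 1)| := by
          gcongr
          · exact (hb0 0).trans (hb 0)
          · exact hb (s + 1)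
          · exact mul_le_of_le_one_left (abs_nonneg _) (by linarith [hb0 (s + 1)])
      _ = discountedSum r (fun j => |x j|) (s + 1) := (discountedSum_succ _ _ s).symm

theorem sq_le_discountedSum_sq_of_moving_average {r : ℝ} (hr : r < 1) {b x m : ℕ → ℝ}
    (hb0 : ∀ j, 0 ≤ b j) (hb : ∀ j, b j ≤ r) (hm0 : m 0 = 0)
    (hm : ∀ j, m (j + 1) = b (j + 1) * m j + (1 - b (j + 1)) * x (j + 1)) (s : ℕ) :
    m s ^ 2 ≤ 1 / (1 - r) * discountedSum r (fun j => x j ^ 2) s := by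
  have hr0 : 0 ≤ r := (hb0 0).trans (hb 0)
  calc m s ^ 2 = |m s| ^ 2 := (sq_abs _).symm
    _ ≤ discountedSum r (fun j => |x j|) s ^ 2 := by
        gcongr
        exact abs_le_discountedSum_of_moving_average hr.le hb0 hb hm0 hm s
    _ ≤ discountedSum r 1 s * discountedSum r (fun j => x j ^ 2) s :=
        sq_discountedSum_abs_le hr0 x s
    _ ≤ 1 / (1 - r) * discountedSum r (fun j => x j ^ 2) s := by
        gcongr
        · exact discountedSum_nonneg hr0 (fun j => sq_nonneg _) s
        · exact discountedSum_one_le hr0 hr s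

theorem sq_le_mul_of_moving_average {r₁ r₂ v : ℝ} (hr : r₁ ≤ r₂) (hr₂ : r₂ < 1)
    {b x m : ℕ → ℝ} (hb0 : ∀ j, 0 ≤ b j) (hb : ∀ j, b j ≤ r₁) (hm0 : m 0 = 0)
    (hm : ∀ j, m (j + 1) = b (j + 1) * m j + (1 - b (j + 1)) * x (j + 1)) {s : ℕ}
    (hv : (1 - r₂) * discountedSum r₂ (fun j => x j ^ 2) s ≤ v) :
    m s ^ 2 ≤ 1 / ((1 - r₁) * (1 - r₂)) * v := by
  have hr₁ : 0 ≤ r₁ := (hb0 0).trans (hb 0)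
  have h1r₁ : 0 < 1 - r₁ := by linarith
  have h1r₂ : 0 < 1 - r₂ := by linarith
  set G := discountedSum r₂ (fun j => x j ^ 2) s
  calc m s ^ 2 ≤ 1 / (1 - r₁) * discountedSum r₁ (fun j => x j ^ 2) s :=
        sq_le_discountedSum_sq_of_moving_average (by linarith) hb0 hb hm0 hm s
    _ ≤ 1 / (1 - r₁) * G := by
        gcongr
        exact discountedSum_mono_rate hr₁ hr (fun j => sq_nonneg _) s
    _ = 1 / ((1 - r₁) * (1 - r₂)) * ((1 - r₂) * G) := by field_simp
    _ ≤ 1 / ((1 - r₁) * (1 - r₂)) * v := by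
        gcongr

theorem sq_div_sqrt_le {a v C : ℝ} (hC : 0 ≤ C) (hv : 0 ≤ v) (h : a ^ 2 ≤ C * v) :
    (a / √v) ^ 2 ≤ C := by
  rw [div_pow, Real.sq_sqrt hv]
  exact div_le_of_le_mul₀ hv hC h

end

theorem dnnAdam_second_layer_moment_normalized_bound_general
    (n d t : ℕ)
    (β₁₂₁ β₂₂ : ℝ) (hβ₁ : 0 < β₁₂₁) (hβ₂ : 0 < β₂₂) (hβ₂' : β₂₂ < 1)
    (hlam : β₁₂₁ / β₂₂ < 1)
    (β : ℕ → ℝ) (hβ0 : ∀ j, 0 ≤ β j) (hβub : ∀ j, β j ≤ β₁₂₁)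
    (g : ℕ → Matrix (Fin n) (Fin d) ℝ)
    (m : ℕ → Matrix (Fin n) (Fin d) ℝ) (hm0 : ∀ p q, m 0 p q = 0)
    (hm : ∀ j p q, m (j + 1) p q = β (j + 1) * m j p q + (1 - β (j + 1)) * g (j + 1) p q)
    (vhat : Matrix (Fin n) (Fin d) ℝ)
    (hvhat : ∀ p q,
      (1 - β₂₂) * ∑ j ∈ Finset.Icc 1 t, β₂₂ ^ (t - j) * (g j p q) ^ 2 ≤ vhat p q) :
    ∑ p, ∑ q, (m t p q / Real.sqrt (vhat p q)) ^ 2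
      ≤ (n : ℝ) * (d : ℝ) / ((1 - β₁₂₁) * (1 - β₂₂) * (1 - β₁₂₁ / β₂₂)) := by
  have hβ₁₂ : β₁₂₁ ≤ β₂₂ := ((div_lt_one hβ₂).mp hlam).le
  have h1β : 0 < (1 - β₁₂₁) * (1 - β₂₂) := mul_pos (by linarith) (by linarith)
  have hlam0 : 0 ≤ β₁₂₁ / β₂₂ := div_nonneg hβ₁.le hβ₂.le
  set C := 1 / ((1 - β₁₂₁) * (1 - β₂₂))
  calc ∑ p, ∑ q, (m t p q / Real.sqrt (vhat p q)) ^ 2 ≤ ∑ _p : Fin n, ∑ _q : Fin d, C := by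
        gcongr with p _ q _
        refine sq_div_sqrt_le (by positivity) (le_trans (by positivity) (hvhat p q)) ?_
        exact sq_le_mul_of_moving_average (m := fun j => m j p q) hβ₁₂ hβ₂' hβ0 hβub (hm0 p q)
          (fun j => hm j p q) (hvhat p q)
    _ = (n : ℝ) * (d : ℝ) / ((1 - β₁₂₁) * (1 - β₂₂)) := by
        simp only [sum_const, card_univ, Fintype.card_fin, nsmul_eq_mul, C]
        ring
    _ ≤ (n : ℝ) * (d : ℝ) / ((1 - β₁₂₁) * (1 - β₂₂) * (1 - β₁₂₁ / β₂₂)) := by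
        refine div_le_div_of_nonneg_left (by positivity) (mul_pos h1β (sub_pos.mpr hlam)) ?_
        exact mul_le_of_le_one_right h1β.le (by linarith)

/-- Lemma 5, bound (3) of the paper.  With time-varying decay
parameters `0 ≤ β_{12j} ≤ β₁₂₁`, the second-layer first-moment recursion
`m_{2,t} = β_{12t} m_{2,t−1} + (1−β_{12t}) g_{2,t}` (started at `0`), and any
`v̂_{2,t}` dominating entrywise the exponential moving average
`(1−β₂₂) Σ_{j=1}^t β₂₂^{t−j} g_{2,j} ⊙ g_{2,j}`, if `λ₂ = β₁₂₁/β₂₂ < 1` then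
`‖(1/√v̂_{2,t}) ⊙ m_{2,t}‖² ≤ n·d/((1−β₁₂₁)(1−β₂₂)(1−λ₂))` in the Frobenius norm.
(Entries with `v̂_{2,t} = 0` contribute `0`; Lean's division by zero is zero.) -/
theorem dnnAdam_second_layer_moment_normalized_bound
    (n d t : ℕ)
    (β₁₂₁ β₂₂ : ℝ) (hβ₁ : 0 < β₁₂₁) (hβ₁' : β₁₂₁ < 1) (hβ₂ : 0 < β₂₂) (hβ₂' : β₂₂ < 1)
    (hlam : β₁₂₁ / β₂₂ < 1)
    (β : ℕ → ℝ) (hβ0 : ∀ j, 0 ≤ β j) (hβub : ∀ j, β j ≤ β₁₂₁)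
    (g : ℕ → Matrix (Fin n) (Fin d) ℝ)
    (m : ℕ → Matrix (Fin n) (Fin d) ℝ) (hm0 : ∀ p q, m 0 p q = 0)
    (hm : ∀ j p q, m (j + 1) p q = β (j + 1) * m j p q + (1 - β (j + 1)) * g (j + 1) p q)
    (vhat : Matrix (Fin n) (Fin d) ℝ)
    (hvhat : ∀ p q,
      (1 - β₂₂) * ∑ j ∈ Finset.Icc 1 t, β₂₂ ^ (t - j) * (g j p q) ^ 2 ≤ vhat p q) :
    ∑ p, ∑ q, (m t p q / Real.sqrt (vhat p q)) ^ 2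
      ≤ (n : ℝ) * (d : ℝ) / ((1 - β₁₂₁) * (1 - β₂₂) * (1 - β₁₂₁ / β₂₂)) :=
  dnnAdam_second_layer_moment_normalized_bound_general n d t β₁₂₁ β₂₂ hβ₁ hβ₂ hβ₂' hlam β hβ0 hβub g
    m hm0 hm vhat hvhat
end
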